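/- arXiv:2603.02146 — 4 statements merged into one kernel-verified Lean document; each statement's English description precedes it below -/
import Mathlib

section
/- (Proposition 1, covariance form.) Let μ be the independent Bernoulli selection model with parameters p : Fin N → [0,1], let G ⊆ Fin N, f a monotone set function on subsets of G with f(∅) = 0 and marginal gains 0 ≤ Δ_j(T) ≤ δ̄_j, and let j ∈ G. Then 0 ≤ Cov_μ(f(Z ∩ G), z_j) ≤ p_j(1 − p_j)·δ̄_j·μ(ℰ_j). -/
open Finset

namespace LongRLVR

/-- Real-valued indicator that chunk `j` belongs to the selection `Z`. -/
noncomputable def ind {N : ℕ} (Z : Fin N → Bool) (j : Fin N) : ℝ := if Z j then 1 else 0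

/-- Expectation of `X` under the finitely supported distribution `μ` on selections. -/
noncomputable def expec {N : ℕ} (μ X : (Fin N → Bool) → ℝ) : ℝ := ∑ Z, μ Z * X Z

/-- Covariance of `X` and `Y` under `μ`. -/
noncomputable def cov {N : ℕ} (μ X Y : (Fin N → Bool) → ℝ) : ℝ :=
  expec μ (fun Z => X Z * Y Z) - expec μ X * expec μ Y

/-- Unnormalized log-linear weight `exp(∑ k, s k * z k + ψ Z)`. -/
noncomputable def wt {N : ℕ} (s : Fin N → ℝ) (ψ : (Fin N → Bool) → ℝ)
    (Z : Fin N → Bool) : ℝ :=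
  Real.exp ((∑ k, s k * ind Z k) + ψ Z)

/-- The log-linear policy `π_s` with potential `ψ`. -/
noncomputable def pol {N : ℕ} (s : Fin N → ℝ) (ψ : (Fin N → Bool) → ℝ)
    (Z : Fin N → Bool) : ℝ :=
  wt s ψ Z / ∑ Z', wt s ψ Z'

/-- Marginal selection probability `p_j(s) = E_{π_s}[z_j]`. -/
noncomputable def pmarg {N : ℕ} (s : Fin N → ℝ) (ψ : (Fin N → Bool) → ℝ) (j : Fin N) : ℝ :=
  expec (pol s ψ) (fun Z => ind Z j)

open Classical in
/-- Probability of the event `A` under `μ`. -/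
noncomputable def probEvent {N : ℕ} (μ : (Fin N → Bool) → ℝ)
    (A : (Fin N → Bool) → Prop) : ℝ :=
  ∑ Z, if A Z then μ Z else 0

open Classical in
/-- Conditional expectation `E_μ[X | A] = E_μ[X · 1_A] / μ(A)`. -/
noncomputable def condExp {N : ℕ} (μ X : (Fin N → Bool) → ℝ)
    (A : (Fin N → Bool) → Prop) : ℝ :=
  (∑ Z, if A Z then μ Z * X Z else 0) / probEvent μ A

/-- The independent Bernoulli selection model with parameters `p`. -/
noncomputable def bern {N : ℕ} (p : Fin N → ℝ) (Z : Fin N → Bool) : ℝ :=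
  ∏ k, if Z k then p k else 1 - p k

/-- Logistic sigmoid. -/
noncomputable def sigmoid (x : ℝ) : ℝ := 1 / (1 + Real.exp (-x))

/-- The subset of `Fin N` corresponding to the selection `Z`. -/
def toFin {N : ℕ} (Z : Fin N → Bool) : Finset (Fin N) :=
  Finset.univ.filter (fun k => Z k = true)

/-! Conditionally on the coordinates other than `j`, the coordinate `z_j` is an independent
Bernoulli(`p_j`) variable, so for any `g` the covariance `Cov(g, z_j)` equals
`p_j (1 - p_j) E[g(W ∪ {j}) - g(W)]`, with `W` the selection with `j` removed. For
`g Z = f(Z ∩ G)` the increment is the marginal gain `Δ_j(W ∩ G)`, which lies in `[0, δ̄_j]` and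
vanishes off `ℰ_j`. -/

open Function

section BernoulliSplit

variable {N : ℕ} (p : Fin N → ℝ) (j : Fin N)

lemma sum_eq_sum_filter_add_update (g : (Fin N → Bool) → ℝ) :
    ∑ Z, g Z = ∑ W with W j = false, (g W + g (update W j true)) := by
  rw [sum_add_distrib, ← sum_filter_add_sum_filter_not univ (fun Z => Z j = false) g]
  congr 1
  have update_update_self {Z : Fin N → Bool} {b : Bool} (c : Bool) (hZ : Z j = b) :
      update (update Z j c) j b = Z := by
    rw [update_idem, ← hZ, update_eq_self]
  refine sum_bij' (fun Z _ => update Z j false) (fun W _ => update W j true)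
    (by simp) (by simp) (fun Z hZ => ?_) (fun W hW => ?_) (fun Z hZ => ?_)
  · exact update_update_self false (by simpa using hZ)
  · exact update_update_self true (by simpa using hW)
  · rw [update_update_self false (by simpa using hZ)]

def bernErase (W : Fin N → Bool) : ℝ := ∏ k ∈ univ.erase j, if W k then p k else 1 - p k

lemma bern_update (W : Fin N → Bool) (b : Bool) :
    bern p (update W j b) = (if b then p j else 1 - p j) * bernErase p j W := by
  rw [bern, ← mul_prod_erase univ _ (mem_univ j), update_self, bernErase]
  congr 1
  exact prod_congr rfl fun k hk => by rw [update_of_ne (ne_of_mem_erase hk)]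

lemma bern_of_eq_false {W : Fin N → Bool} (hW : W j = false) :
    bern p W = (1 - p j) * bernErase p j W := by
  have h := bern_update p j W (W j)
  rw [update_eq_self] at h
  simp [h, hW]

lemma sum_bern : ∑ Z, bern p Z = 1 := by
  simp_rw [bern, ← Fintype.prod_sum fun k (b : Bool) => if b then p k else 1 - p k]
  simp

lemma bernErase_nonneg (hp : ∀ k, 0 ≤ p k ∧ p k ≤ 1) (W : Fin N → Bool) :
    0 ≤ bernErase p j W :=
  prod_nonneg fun k _ => by split_ifs <;> linarith [hp k]

lemma expec_bern_eq (g : (Fin N → Bool) → ℝ) :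
    expec (bern p) g = ∑ W with W j = false,
      bernErase p j W * ((1 - p j) * g W + p j * g (update W j true)) := by
  rw [expec, sum_eq_sum_filter_add_update j]
  refine sum_congr rfl fun W hW => ?_
  rw [bern_of_eq_false p j (mem_filter.1 hW).2, bern_update]
  simp only [if_true]
  ring

lemma sum_bernErase : ∑ W with W j = false, bernErase p j W = 1 := by
  have h := expec_bern_eq p j 1
  simp only [expec, Pi.one_apply, mul_one, sub_add_cancel] at h
  rw [← h, sum_bern]

lemma expec_bern_ind : expec (bern p) (fun Z => ind Z j) = p j := by
  calc expec (bern p) (fun Z => ind Z j) = (∑ W with W j = false, bernErase p j W) * p j := by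
        rw [expec_bern_eq p j, sum_mul]
        refine sum_congr rfl fun W hW => ?_
        simp [ind, (mem_filter.1 hW).2]
    _ = p j := by rw [sum_bernErase, one_mul]

theorem cov_bern_ind (g : (Fin N → Bool) → ℝ) :
    cov (bern p) g (fun Z => ind Z j) =
      p j * (1 - p j) * ∑ W with W j = false, bernErase p j W * (g (update W j true) - g W) := by
  have h_mul : expec (bern p) (fun Z => g Z * ind Z j) =
      p j * ∑ W with W j = false, bernErase p j W * g (update W j true) := by
    rw [expec_bern_eq p j, mul_sum]
    refine sum_congr rfl fun W hW => ?_
    simp only [ind, (mem_filter.1 hW).2, update_self, Bool.false_eq_true, if_false, if_true]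
    ring
  rw [cov, h_mul, expec_bern_eq p j, expec_bern_ind, mul_sum, sum_mul, mul_sum,
    ← sum_sub_distrib]
  exact sum_congr rfl fun W _ => by ring

lemma probEvent_bern_eq (A : (Fin N → Bool) → Prop) [DecidablePred A]
    (hA : ∀ W, A (update W j true) ↔ A W) :
    probEvent (bern p) A = ∑ W with W j = false, if A W then bernErase p j W else 0 := by
  have h := expec_bern_eq p j (fun Z => if A Z then 1 else 0)
  rw [expec] at h
  rw [probEvent]
  convert h using 2 with Z - W
  · split_ifs <;> simp
  · simp only [hA]
    split_ifs <;> ring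

end BernoulliSplit

lemma sum_mul_le_mul_sum_ite_pos {ι : Type*} (s : Finset ι) (r d : ι → ℝ) {δ : ℝ}
    (hr : ∀ i ∈ s, 0 ≤ r i) (hd : ∀ i ∈ s, 0 ≤ d i ∧ d i ≤ δ) :
    ∑ i ∈ s, r i * d i ≤ δ * ∑ i ∈ s, if 0 < d i then r i else 0 := by
  rw [mul_sum]
  refine sum_le_sum fun i hi => ?_
  obtain ⟨hd0, hdδ⟩ := hd i hi
  split_ifs with hpos
  · rw [mul_comm]
    exact mul_le_mul_of_nonneg_right hdδ (hr i hi)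
  · simp [le_antisymm (not_lt.1 hpos) hd0]

section Restriction

variable {N : ℕ} (G : Finset (Fin N)) {j : Fin N}

lemma toFin_update_true_inter (hj : j ∈ G) (W : Fin N → Bool) :
    toFin (update W j true) ∩ G = insert j (toFin W ∩ G) := by
  ext k
  by_cases hk : k = j <;> simp [toFin, hk, hj]

lemma erase_toFin_update_inter (W : Fin N → Bool) (b : Bool) :
    (toFin (update W j b) ∩ G).erase j = (toFin W ∩ G).erase j := by
  ext k
  by_cases hk : k = j <;> simp [toFin, hk]

lemma notMem_toFin_inter {W : Fin N → Bool} (hW : W j = false) : j ∉ toFin W ∩ G := by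
  simp [toFin, hW]

end Restriction

theorem stmt8_general (N : ℕ) (p : Fin N → ℝ) (hp : ∀ k, 0 ≤ p k ∧ p k ≤ 1)
    (G : Finset (Fin N)) (f : Finset (Fin N) → ℝ)
    (j : Fin N) (hj : j ∈ G) (δb : ℝ)
    (hΔ : ∀ T : Finset (Fin N), T ⊆ G.erase j →
      0 ≤ f (insert j T) - f T ∧ f (insert j T) - f T ≤ δb) :
    0 ≤ cov (bern p) (fun Z => f (toFin Z ∩ G)) (fun Z => ind Z j) ∧
    cov (bern p) (fun Z => f (toFin Z ∩ G)) (fun Z => ind Z j)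
      ≤ p j * (1 - p j) * δb * probEvent (bern p)
          (fun Z => 0 < f (insert j ((toFin Z ∩ G).erase j)) - f ((toFin Z ∩ G).erase j)) := by
  set gain : (Fin N → Bool) → ℝ := fun W => f (insert j (toFin W ∩ G)) - f (toFin W ∩ G)
  have hcov : cov (bern p) (fun Z => f (toFin Z ∩ G)) (fun Z => ind Z j) =
      p j * (1 - p j) * ∑ W with W j = false, bernErase p j W * gain W := by
    simp only [cov_bern_ind p j, toFin_update_true_inter G hj, gain]
  have hevent : probEvent (bern p)
        (fun Z => 0 < f (insert j ((toFin Z ∩ G).erase j)) - f ((toFin Z ∩ G).erase j)) =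
      ∑ W with W j = false, if 0 < gain W then bernErase p j W else 0 := by
    rw [probEvent_bern_eq p j _ fun W => by rw [erase_toFin_update_inter]]
    refine sum_congr rfl fun W hW => ?_
    rw [erase_eq_of_notMem (notMem_toFin_inter G (mem_filter.1 hW).2)]
  have hgain : ∀ W ∈ univ.filter (· j = false), 0 ≤ gain W ∧ gain W ≤ δb := fun W hW =>
    hΔ _ (subset_erase.2 ⟨inter_subset_right, notMem_toFin_inter G (mem_filter.1 hW).2⟩)
  have hvar : 0 ≤ p j * (1 - p j) := mul_nonneg (hp j).1 (sub_nonneg.2 (hp j).2)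
  rw [hcov, hevent, mul_assoc _ δb]
  refine ⟨mul_nonneg hvar (sum_nonneg fun W hW => ?_), mul_le_mul_of_nonneg_left ?_ hvar⟩
  · exact mul_nonneg (bernErase_nonneg p j hp W) (hgain W hW).1
  · exact sum_mul_le_mul_sum_ite_pos _ _ _ (fun W _ => bernErase_nonneg p j hp W) hgain

/-- Proposition 1, covariance form:
`0 ≤ Cov_μ(f(Z ∩ G), z_j) ≤ p_j (1 − p_j) δ̄_j μ(ℰ_j)`. -/
theorem stmt8 (N : ℕ) (p : Fin N → ℝ) (hp : ∀ k, 0 ≤ p k ∧ p k ≤ 1)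
    (G : Finset (Fin N)) (f : Finset (Fin N) → ℝ) (hf0 : f ∅ = 0)
    (hmono : ∀ S T : Finset (Fin N), S ⊆ T → T ⊆ G → f S ≤ f T)
    (j : Fin N) (hj : j ∈ G) (δb : ℝ) (hδb : 0 < δb)
    (hΔ : ∀ T : Finset (Fin N), T ⊆ G.erase j →
      0 ≤ f (insert j T) - f T ∧ f (insert j T) - f T ≤ δb) :
    0 ≤ cov (bern p) (fun Z => f (toFin Z ∩ G)) (fun Z => ind Z j) ∧
    cov (bern p) (fun Z => f (toFin Z ∩ G)) (fun Z => ind Z j)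
      ≤ p j * (1 - p j) * δb * probEvent (bern p)
          (fun Z => 0 < f (insert j ((toFin Z ∩ G).erase j)) - f ((toFin Z ∩ G).erase j)) :=
  stmt8_general N p hp G f j hj δb hΔ

end LongRLVR
end

section
/- (Proposition 1, gradient form.) Fix logits s : Fin N → ℝ and let π_s be the log-linear policy with potential ψ ≡ 0, so that the coordinates are independent with p_k = σ(s_k). Let G ⊆ Fin N, f a monotone set function on subsets of G with f(∅) = 0 and marginal gains 0 ≤ Δ_j(T) ≤ δ̄_j, μ₀ ∈ ℝ, and j ∈ G. Then the function t ↦ E_{π_{s[j := t]}}[μ₀ + f(Z ∩ G)] is differentiable at t = s_j, and its derivative D there satisfies 0 ≤ D ≤ σ(s_j)(1 − σ(s_j))·δ̄_j·π_s(ℰ_j). -/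
open Finset

namespace LongRLVR

set_option maxHeartbeats 1000000 in
/-- Proposition 1, gradient form: for the log-linear policy with `ψ ≡ 0`,
the map `t ↦ E_{π_{s[j:=t]}}[μ₀ + f(Z ∩ G)]` is differentiable at `t = s_j` and its
derivative `D` satisfies `0 ≤ D ≤ σ(s_j)(1 − σ(s_j)) δ̄_j π_s(ℰ_j)`. -/
theorem stmt9 (N : ℕ) (s : Fin N → ℝ) (G : Finset (Fin N)) (f : Finset (Fin N) → ℝ)
    (hf0 : f ∅ = 0)
    (hmono : ∀ S T : Finset (Fin N), S ⊆ T → T ⊆ G → f S ≤ f T)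
    (μ₀ : ℝ) (j : Fin N) (hj : j ∈ G) (δb : ℝ) (hδb : 0 < δb)
    (hΔ : ∀ T : Finset (Fin N), T ⊆ G.erase j →
      0 ≤ f (insert j T) - f T ∧ f (insert j T) - f T ≤ δb) :
    DifferentiableAt ℝ
      (fun t : ℝ => expec (pol (Function.update s j t) (fun _ => 0))
        (fun Z => μ₀ + f (toFin Z ∩ G))) (s j) ∧
    0 ≤ deriv (fun t : ℝ => expec (pol (Function.update s j t) (fun _ => 0))
        (fun Z => μ₀ + f (toFin Z ∩ G))) (s j) ∧
    deriv (fun t : ℝ => expec (pol (Function.update s j t) (fun _ => 0))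
        (fun Z => μ₀ + f (toFin Z ∩ G))) (s j)
      ≤ sigmoid (s j) * (1 - sigmoid (s j)) * δb *
        probEvent (pol s (fun _ => 0))
          (fun Z => 0 < f (insert j ((toFin Z ∩ G).erase j)) - f ((toFin Z ∩ G).erase j)) := by
  classical
  -- local abbreviations
  set X : (Fin N → Bool) → ℝ := fun Z => μ₀ + f (toFin Z ∩ G) with hXdef
  set c : (Fin N → Bool) → ℝ :=
    fun Z => Real.exp (∑ k ∈ Finset.univ.erase j, s k * ind Z k) with hcdef
  have hcpos : ∀ Z, 0 < c Z := fun Z => Real.exp_pos _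
  set P : Finset (Fin N → Bool) := Finset.univ.filter (fun Z => Z j = false) with hPdef
  set fl : (Fin N → Bool) → (Fin N → Bool) := fun Z => Function.update Z j true with hfldef
  have hmemP : ∀ Z, Z ∈ P ↔ Z j = false := by
    intro Z; simp [hPdef]
  have hflj : ∀ Z : Fin N → Bool, fl Z j = true := by
    intro Z; simp [hfldef]
  have hflk : ∀ (Z : Fin N → Bool) (k : Fin N), k ≠ j → fl Z k = Z k := by
    intro Z k hk; simp [hfldef, Function.update_of_ne hk]
  -- pair splitting of sums over all selections
  have hsplit : ∀ h : (Fin N → Bool) → ℝ, ∑ Z, h Z = ∑ Z ∈ P, (h Z + h (fl Z)) := by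
    intro h
    rw [Finset.sum_add_distrib]
    have h2 : ∑ Z ∈ P, h (fl Z)
        = ∑ Z ∈ Finset.univ.filter (fun Z => ¬ Z j = false), h Z := by
      refine Finset.sum_nbij' fl (fun Z => Function.update Z j false) ?_ ?_ ?_ ?_ ?_
      · intro a ha; simp [hfldef]
      · intro a ha; simp [hPdef]
      · intro a ha
        have ha' := (hmemP a).1 ha
        funext k
        rcases eq_or_ne k j with rfl | hk
        · simp [hfldef, ha']
        · simp [hfldef, Function.update_of_ne hk]
      · intro a ha
        simp only [Finset.mem_filter, Bool.not_eq_false] at ha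
        funext k
        rcases eq_or_ne k j with rfl | hk
        · simp [hfldef, ha.2]
        · simp [hfldef, Function.update_of_ne hk]
      · intro a ha; rfl
    rw [hPdef, h2, Finset.sum_filter_add_sum_filter_not]
  -- c is flip-invariant
  have hcfl : ∀ Z, c (fl Z) = c Z := by
    intro Z
    simp only [hcdef]
    congr 1
    refine Finset.sum_congr rfl fun k hk => ?_
    have hk' : k ≠ j := (Finset.mem_erase.1 hk).1
    rw [ind, ind, hflk Z k hk']
  -- the weight in product form
  have hwt : ∀ (t : ℝ) (Z : Fin N → Bool),
      wt (Function.update s j t) (fun _ => 0) Z = Real.exp (t * ind Z j) * c Z := by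
    intro t Z
    have hsum : (∑ k, Function.update s j t k * ind Z k)
        = t * ind Z j + ∑ k ∈ Finset.univ.erase j, s k * ind Z k := by
      rw [← Finset.add_sum_erase Finset.univ (fun k => Function.update s j t k * ind Z k)
        (Finset.mem_univ j)]
      congr 1
      · rw [Function.update_self]
      · exact Finset.sum_congr rfl fun k hk => by
          rw [Function.update_of_ne (Finset.mem_erase.1 hk).1]
    simp only [wt, hcdef]
    rw [hsum, add_zero, Real.exp_add]
  have hind0 : ∀ Z ∈ P, ind Z j = 0 := by
    intro Z hZ; simp [ind, (hmemP Z).1 hZ]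
  have hind1 : ∀ Z : Fin N → Bool, ind (fl Z) j = 1 := by
    intro Z; simp [ind, hflj Z]
  -- the key constants
  set B : ℝ := ∑ Z ∈ P, c Z with hBdef
  set A0 : ℝ := ∑ Z ∈ P, c Z * X Z with hA0def
  set A1 : ℝ := ∑ Z ∈ P, c Z * X (fl Z) with hA1def
  have hBpos : 0 < B := by
    rw [hBdef]
    refine Finset.sum_pos (fun Z _ => hcpos Z) ⟨fun _ => false, ?_⟩
    exact (hmemP _).2 rfl
  have hone : (0:ℝ) < 1 + Real.exp (s j) := by positivity
  -- denominator and numerator of the expectation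
  have hGd : ∀ t : ℝ, (∑ Z, wt (Function.update s j t) (fun _ => 0) Z)
      = (1 + Real.exp t) * B := by
    intro t
    rw [hsplit]
    have step : ∀ Z ∈ P,
        wt (Function.update s j t) (fun _ => 0) Z
          + wt (Function.update s j t) (fun _ => 0) (fl Z)
        = (1 + Real.exp t) * c Z := by
      intro Z hZ
      rw [hwt t Z, hwt t (fl Z), hind0 Z hZ, hind1 Z, hcfl Z, mul_zero, Real.exp_zero,
        one_mul, mul_one]
      ring
    rw [Finset.sum_congr rfl step, ← Finset.mul_sum, hBdef]
  have hF : ∀ t : ℝ, (∑ Z, wt (Function.update s j t) (fun _ => 0) Z * X Z)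
      = A0 + Real.exp t * A1 := by
    intro t
    rw [hsplit (fun Z => wt (Function.update s j t) (fun _ => 0) Z * X Z)]
    have step : ∀ Z ∈ P,
        wt (Function.update s j t) (fun _ => 0) Z * X Z
          + wt (Function.update s j t) (fun _ => 0) (fl Z) * X (fl Z)
        = c Z * X Z + Real.exp t * (c Z * X (fl Z)) := by
      intro Z hZ
      rw [hwt t Z, hwt t (fl Z), hind0 Z hZ, hind1 Z, hcfl Z, mul_zero, Real.exp_zero,
        one_mul, mul_one]
      ring
    rw [Finset.sum_congr rfl step, Finset.sum_add_distrib, ← Finset.mul_sum, hA0def, hA1def]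
  -- closed form of the expectation
  have hE : ∀ t : ℝ, expec (pol (Function.update s j t) (fun _ => 0)) X
      = (A0 + Real.exp t * A1) / ((1 + Real.exp t) * B) := by
    intro t
    simp only [expec, pol]
    rw [Finset.sum_congr rfl (fun Z _ => div_mul_eq_mul_div
      (wt (Function.update s j t) (fun _ => 0) Z)
      (∑ Z', wt (Function.update s j t) (fun _ => 0) Z') (X Z)),
      ← Finset.sum_div, hF t, hGd t]
  have hfun : (fun t : ℝ => expec (pol (Function.update s j t) (fun _ => 0)) X)
      = fun t : ℝ => (A0 + Real.exp t * A1) / ((1 + Real.exp t) * B) := funext hE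
  -- differentiation
  have hdenne : ((1 + Real.exp (s j)) * B) ≠ 0 := ne_of_gt (mul_pos hone hBpos)
  have hnum : HasDerivAt (fun t : ℝ => A0 + Real.exp t * A1) (Real.exp (s j) * A1) (s j) :=
    ((Real.hasDerivAt_exp (s j)).mul_const A1).const_add A0
  have hden : HasDerivAt (fun t : ℝ => (1 + Real.exp t) * B) (Real.exp (s j) * B) (s j) :=
    ((Real.hasDerivAt_exp (s j)).const_add 1).mul_const B
  have hD0 : HasDerivAt (fun t : ℝ => (A0 + Real.exp t * A1) / ((1 + Real.exp t) * B))
      ((Real.exp (s j) * A1 * ((1 + Real.exp (s j)) * B)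
        - (A0 + Real.exp (s j) * A1) * (Real.exp (s j) * B))
        / ((1 + Real.exp (s j)) * B) ^ 2) (s j) :=
    hnum.div hden hdenne
  have hDfun : HasDerivAt (fun t : ℝ => expec (pol (Function.update s j t) (fun _ => 0)) X)
      ((Real.exp (s j) * A1 * ((1 + Real.exp (s j)) * B)
        - (A0 + Real.exp (s j) * A1) * (Real.exp (s j) * B))
        / ((1 + Real.exp (s j)) * B) ^ 2) (s j) := by
    rw [hfun]; exact hD0
  -- the set-function marginal gain facts
  have hTsub : ∀ Z ∈ P, toFin Z ∩ G ⊆ G.erase j := by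
    intro Z hZ k hk
    rcases Finset.mem_inter.1 hk with ⟨h1, h2⟩
    rw [Finset.mem_erase]
    refine ⟨?_, h2⟩
    rintro rfl
    have hkt : Z k = true := by simpa [toFin] using h1
    rw [(hmemP Z).1 hZ] at hkt
    exact absurd hkt (by simp)
  have hjT : ∀ Z ∈ P, j ∉ toFin Z ∩ G := by
    intro Z hZ h
    exact (Finset.mem_erase.1 (hTsub Z hZ h)).1 rfl
  have htfl : ∀ Z ∈ P, toFin (fl Z) ∩ G = insert j (toFin Z ∩ G) := by
    intro Z hZ
    have h1 : toFin (fl Z) = insert j (toFin Z) := by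
      ext k
      simp only [toFin, Finset.mem_filter, Finset.mem_univ, true_and, Finset.mem_insert]
      rcases eq_or_ne k j with rfl | hk
      · simp [hflj Z]
      · simp [hflk Z k hk, hk]
    rw [h1, Finset.insert_inter_of_mem hj]
  have hXfl : ∀ Z ∈ P, X (fl Z)
      = X Z + (f (insert j (toFin Z ∩ G)) - f (toFin Z ∩ G)) := by
    intro Z hZ
    simp only [hXdef]
    rw [htfl Z hZ]
    ring
  have hDf0 : ∀ Z ∈ P, 0 ≤ f (insert j (toFin Z ∩ G)) - f (toFin Z ∩ G) :=
    fun Z hZ => (hΔ _ (hTsub Z hZ)).1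
  have hDfb : ∀ Z ∈ P, f (insert j (toFin Z ∩ G)) - f (toFin Z ∩ G) ≤ δb :=
    fun Z hZ => (hΔ _ (hTsub Z hZ)).2
  have hA : A1 - A0 = ∑ Z ∈ P, c Z * (f (insert j (toFin Z ∩ G)) - f (toFin Z ∩ G)) := by
    rw [hA1def, hA0def, ← Finset.sum_sub_distrib]
    refine Finset.sum_congr rfl fun Z hZ => ?_
    rw [hXfl Z hZ]; ring
  -- the derivative value, simplified
  have hDval : (Real.exp (s j) * A1 * ((1 + Real.exp (s j)) * B)
        - (A0 + Real.exp (s j) * A1) * (Real.exp (s j) * B))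
        / ((1 + Real.exp (s j)) * B) ^ 2
      = Real.exp (s j) * (∑ Z ∈ P, c Z * (f (insert j (toFin Z ∩ G)) - f (toFin Z ∩ G)))
        / ((1 + Real.exp (s j)) ^ 2 * B) := by
    rw [← hA]
    have h1 : (1:ℝ) + Real.exp (s j) ≠ 0 := ne_of_gt hone
    have h2 : B ≠ 0 := ne_of_gt hBpos
    field_simp
    ring
  have hsumDf : 0 ≤ ∑ Z ∈ P, c Z * (f (insert j (toFin Z ∩ G)) - f (toFin Z ∩ G)) :=
    Finset.sum_nonneg fun Z hZ => mul_nonneg (hcpos Z).le (hDf0 Z hZ)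
  -- probability of the activation event
  have hwts : ∀ Z, wt s (fun _ => 0) Z = Real.exp (s j * ind Z j) * c Z := by
    intro Z
    have h := hwt (s j) Z
    rwa [Function.update_eq_self] at h
  have hW0 : (∑ Z, wt s (fun _ => 0) Z) = (1 + Real.exp (s j)) * B := by
    have h := hGd (s j)
    rwa [Function.update_eq_self] at h
  have hEZ : ∀ Z ∈ P, (toFin Z ∩ G).erase j = toFin Z ∩ G :=
    fun Z hZ => Finset.erase_eq_of_notMem (hjT Z hZ)
  have hEfl : ∀ Z ∈ P, (toFin (fl Z) ∩ G).erase j = toFin Z ∩ G := by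
    intro Z hZ
    rw [htfl Z hZ, Finset.erase_insert (hjT Z hZ)]
  have hPr : probEvent (pol s (fun _ => 0))
      (fun Z => 0 < f (insert j ((toFin Z ∩ G).erase j)) - f ((toFin Z ∩ G).erase j))
      = (∑ Z ∈ P, if 0 < f (insert j (toFin Z ∩ G)) - f (toFin Z ∩ G) then c Z else 0) / B := by
    simp only [probEvent]
    rw [hsplit (fun Z => if 0 < f (insert j ((toFin Z ∩ G).erase j))
      - f ((toFin Z ∩ G).erase j) then pol s (fun _ => 0) Z else 0)]
    have step : ∀ Z ∈ P,
        ((if 0 < f (insert j ((toFin Z ∩ G).erase j)) - f ((toFin Z ∩ G).erase j)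
            then pol s (fun _ => 0) Z else 0)
          + (if 0 < f (insert j ((toFin (fl Z) ∩ G).erase j)) - f ((toFin (fl Z) ∩ G).erase j)
            then pol s (fun _ => 0) (fl Z) else 0))
        = (if 0 < f (insert j (toFin Z ∩ G)) - f (toFin Z ∩ G) then c Z else 0) / B := by
      intro Z hZ
      rw [hEZ Z hZ, hEfl Z hZ]
      by_cases hd : 0 < f (insert j (toFin Z ∩ G)) - f (toFin Z ∩ G)
      · rw [if_pos hd, if_pos hd, if_pos hd]
        simp only [pol]
        rw [hW0, hwts Z, hwts (fl Z), hind0 Z hZ, hind1 Z, hcfl Z, mul_zero, Real.exp_zero,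
          one_mul, mul_one]
        have h1 : (1:ℝ) + Real.exp (s j) ≠ 0 := ne_of_gt hone
        have h2 : B ≠ 0 := ne_of_gt hBpos
        field_simp
      · rw [if_neg hd, if_neg hd, if_neg hd]
        simp
    rw [Finset.sum_congr rfl step, ← Finset.sum_div]
  -- sigmoid identity
  have hsig : sigmoid (s j) * (1 - sigmoid (s j))
      = Real.exp (s j) / (1 + Real.exp (s j)) ^ 2 := by
    simp only [sigmoid]
    rw [Real.exp_neg]
    have h0 : Real.exp (s j) ≠ 0 := (Real.exp_pos _).ne'
    have h2 : (1:ℝ) + (Real.exp (s j))⁻¹ ≠ 0 := by positivity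
    have h1 : (1:ℝ) + Real.exp (s j) ≠ 0 := ne_of_gt hone
    field_simp
    ring
  -- assemble
  refine ⟨hDfun.differentiableAt, ?_, ?_⟩
  · rw [hDfun.deriv, hDval]
    exact div_nonneg (mul_nonneg (Real.exp_pos _).le hsumDf) (by positivity)
  · rw [hDfun.deriv, hDval, hsig, hPr]
    have key : (∑ Z ∈ P, c Z * (f (insert j (toFin Z ∩ G)) - f (toFin Z ∩ G)))
        ≤ δb * ∑ Z ∈ P, (if 0 < f (insert j (toFin Z ∩ G)) - f (toFin Z ∩ G) then c Z else 0) := by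
      rw [Finset.mul_sum]
      refine Finset.sum_le_sum fun Z hZ => ?_
      by_cases hd : 0 < f (insert j (toFin Z ∩ G)) - f (toFin Z ∩ G)
      · rw [if_pos hd]
        calc c Z * (f (insert j (toFin Z ∩ G)) - f (toFin Z ∩ G))
            ≤ c Z * δb := mul_le_mul_of_nonneg_left (hDfb Z hZ) (hcpos Z).le
          _ = δb * c Z := mul_comm _ _
      · rw [if_neg hd]
        have h0 : f (insert j (toFin Z ∩ G)) - f (toFin Z ∩ G) = 0 :=
          le_antisymm (not_lt.1 hd) (hDf0 Z hZ)
        rw [h0, mul_zero, mul_zero]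
    calc Real.exp (s j) * (∑ Z ∈ P, c Z * (f (insert j (toFin Z ∩ G)) - f (toFin Z ∩ G)))
          / ((1 + Real.exp (s j)) ^ 2 * B)
        ≤ Real.exp (s j)
          * (δb * ∑ Z ∈ P, (if 0 < f (insert j (toFin Z ∩ G)) - f (toFin Z ∩ G) then c Z else 0))
          / ((1 + Real.exp (s j)) ^ 2 * B) := by
          gcongr
      _ = Real.exp (s j) / (1 + Real.exp (s j)) ^ 2 * δb
          * ((∑ Z ∈ P, (if 0 < f (insert j (toFin Z ∩ G)) - f (toFin Z ∩ G) then c Z else 0)) / B) := by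
          have h1 : (1:ℝ) + Real.exp (s j) ≠ 0 := ne_of_gt hone
          have h2 : B ≠ 0 := ne_of_gt hBpos
          field_simp


end LongRLVR
end

section
/- (GRPO group-baseline identity.) Let μ be a probability distribution on selections, R : (Fin N → Bool) → ℝ a reward function, j : Fin N with p_j = E_μ[z_j], and K ≥ 2. For i.i.d. selections Z_1, …, Z_K each distributed according to μ (i.e., taking expectation over the K-fold product of μ), E[ (R(Z_1) − (1/K)·∑_{i=1}^K R(Z_i)) · (z_j(Z_1) − p_j) ] = ((K − 1)/K) · Cov_μ(R, z_j). -/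
open Finset

namespace LongRLVR

lemma sum_pi_prod {K N : ℕ} (g : Fin K → (Fin N → Bool) → ℝ) :
    ∑ Zs : Fin K → (Fin N → Bool), ∏ l, g l (Zs l) = ∏ l, ∑ Z, g l Z := by
  rw [Finset.prod_univ_sum, ← Fintype.piFinset_univ]

lemma sum_coord {K N : ℕ} (μ : (Fin N → Bool) → ℝ) (hμ1 : ∑ Z, μ Z = 1)
    (i : Fin K) (F : (Fin N → Bool) → ℝ) :
    ∑ Zs : Fin K → (Fin N → Bool), (∏ l, μ (Zs l)) * F (Zs i)
      = ∑ Z, μ Z * F Z := by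
  have h : ∀ Zs : Fin K → (Fin N → Bool),
      (∏ l, μ (Zs l)) * F (Zs i)
        = ∏ l, (μ (Zs l) * (if l = i then F (Zs l) else 1)) := by
    intro Zs
    rw [Finset.prod_mul_distrib, Finset.prod_ite_eq' univ i (fun l => F (Zs l))]
    simp
  simp only [h]
  rw [sum_pi_prod (fun l Z => μ Z * (if l = i then F Z else 1))]
  rw [Finset.prod_eq_single i]
  · simp
  · intro l _ hl
    simp [hl, hμ1]
  · simp

lemma sum_coord2 {K N : ℕ} (μ : (Fin N → Bool) → ℝ) (hμ1 : ∑ Z, μ Z = 1)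
    (i i' : Fin K) (hne : i ≠ i') (F G : (Fin N → Bool) → ℝ) :
    ∑ Zs : Fin K → (Fin N → Bool), (∏ l, μ (Zs l)) * F (Zs i) * G (Zs i')
      = (∑ Z, μ Z * F Z) * (∑ Z, μ Z * G Z) := by
  have h : ∀ Zs : Fin K → (Fin N → Bool),
      (∏ l, μ (Zs l)) * F (Zs i) * G (Zs i')
        = ∏ l, (μ (Zs l) * (if l = i then F (Zs l) else 1)
            * (if l = i' then G (Zs l) else 1)) := by
    intro Zs
    rw [Finset.prod_mul_distrib, Finset.prod_mul_distrib,
      Finset.prod_ite_eq' univ i (fun l => F (Zs l)),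
      Finset.prod_ite_eq' univ i' (fun l => G (Zs l))]
    simp
  simp only [h]
  rw [sum_pi_prod (fun l Z => μ Z * (if l = i then F Z else 1) * (if l = i' then G Z else 1))]
  set hfun : Fin K → ℝ := fun l => ∑ Z, μ Z * (if l = i then F Z else 1)
      * (if l = i' then G Z else 1) with hdef
  rw [← Finset.mul_prod_erase univ hfun (mem_univ i)]
  have h2 : ∏ l ∈ univ.erase i, hfun l = hfun i' := by
    apply Finset.prod_eq_single_of_mem
    · exact Finset.mem_erase.mpr ⟨Ne.symm hne, mem_univ i'⟩
    · intro b hb hbi'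
      have hbi : b ≠ i := (Finset.mem_erase.mp hb).1
      simp [hdef, hbi, hbi', hμ1]
  rw [h2]
  simp [hdef, hne, Ne.symm hne]

/-- GRPO group-baseline identity: for `K ≥ 2` i.i.d. selections from `μ`,
`E[(R(Z_1) − (1/K)∑_i R(Z_i))(z_j(Z_1) − p_j)] = ((K−1)/K)·Cov_μ(R, z_j)`. -/
theorem stmt10 (N : ℕ) (μ : (Fin N → Bool) → ℝ) (hμ0 : ∀ Z, 0 ≤ μ Z)
    (hμ1 : ∑ Z, μ Z = 1) (R : (Fin N → Bool) → ℝ) (j : Fin N) (pj : ℝ)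
    (hpj : pj = expec μ (fun Z => ind Z j)) (K : ℕ) (hK : 2 ≤ K) :
    ∑ Zs : Fin K → (Fin N → Bool), (∏ i, μ (Zs i)) *
        ((R (Zs ⟨0, by omega⟩) - (1 / (K : ℝ)) * ∑ i, R (Zs i))
          * (ind (Zs ⟨0, by omega⟩) j - pj))
      = (((K : ℝ) - 1) / (K : ℝ)) * cov μ R (fun Z => ind Z j) := by
  have hKne : (K : ℝ) ≠ 0 := by
    have : (0:ℕ) < K := by omega
    exact_mod_cast this.ne'
  set i0 : Fin K := ⟨0, by omega⟩ with hi0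
  set D : (Fin N → Bool) → ℝ := fun Z => ind Z j - pj with hD
  -- expectation of D is zero
  have hDzero : ∑ Z, μ Z * D Z = 0 := by
    simp only [hD, mul_sub, Finset.sum_sub_distrib, ← Finset.sum_mul, hμ1, hpj, expec]
    ring
  -- covariance as a single expectation
  have hcov : ∑ Z, μ Z * (R Z * D Z) = cov μ R (fun Z => ind Z j) := by
    have hpt : ∀ Z, μ Z * (R Z * D Z) = μ Z * (R Z * ind Z j) - pj * (μ Z * R Z) := by
      intro Z; simp only [hD]; ring
    simp only [hpt]
    rw [Finset.sum_sub_distrib, ← Finset.mul_sum]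
    simp only [cov, expec, hpj]
    ring
  -- pointwise expansion
  have expand : ∀ Zs : Fin K → (Fin N → Bool),
      (∏ i, μ (Zs i)) * ((R (Zs i0) - (1 / (K : ℝ)) * ∑ i, R (Zs i)) * D (Zs i0))
        = (∏ l, μ (Zs l)) * (R (Zs i0) * D (Zs i0))
          - (1 / (K : ℝ)) * ∑ i, (∏ l, μ (Zs l)) * D (Zs i0) * R (Zs i) := by
    intro Zs
    have hsum : ∑ i, (∏ l, μ (Zs l)) * D (Zs i0) * R (Zs i)
        = (∏ l, μ (Zs l)) * D (Zs i0) * ∑ i, R (Zs i) := by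
      rw [Finset.mul_sum]
    rw [hsum]
    ring
  calc ∑ Zs : Fin K → (Fin N → Bool), (∏ i, μ (Zs i)) *
        ((R (Zs i0) - (1 / (K : ℝ)) * ∑ i, R (Zs i)) * D (Zs i0))
      = (∑ Zs : Fin K → (Fin N → Bool), (∏ l, μ (Zs l)) * (R (Zs i0) * D (Zs i0)))
        - (1 / (K : ℝ)) * ∑ i, ∑ Zs : Fin K → (Fin N → Bool),
            (∏ l, μ (Zs l)) * D (Zs i0) * R (Zs i) := by
        simp only [expand]
        rw [Finset.sum_sub_distrib, ← Finset.mul_sum, Finset.sum_comm]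
    _ = cov μ R (fun Z => ind Z j)
        - (1 / (K : ℝ)) * ∑ i : Fin K, (if i = i0 then cov μ R (fun Z => ind Z j) else 0) := by
        congr 1
        · rw [sum_coord μ hμ1 i0 (fun Z => R Z * D Z), hcov]
        congr 1
        apply Finset.sum_congr rfl
        intro i _
        by_cases hi : i = i0
        · rw [hi, if_pos rfl]
          have hpt2 : ∀ Zs : Fin K → (Fin N → Bool),
              (∏ l, μ (Zs l)) * D (Zs i0) * R (Zs i0)
                = (∏ l, μ (Zs l)) * (R (Zs i0) * D (Zs i0)) := by
            intro Zs; ring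
          simp only [hpt2]
          rw [sum_coord μ hμ1 i0 (fun Z => R Z * D Z), hcov]
        · simp only [if_neg hi]
          rw [sum_coord2 μ hμ1 i0 i (Ne.symm hi) D R, hDzero, zero_mul]
    _ = (((K : ℝ) - 1) / (K : ℝ)) * cov μ R (fun Z => ind Z j) := by
        rw [Finset.sum_ite_eq' univ i0 (fun _ => cov μ R (fun Z => ind Z j))]
        simp only [mem_univ, if_pos]
        field_simp


end LongRLVR
end

section
/- (Proposition 2, non-vanishing lower bound.) In the setting of the Proposition 2 gradient identity, suppose additionally that α_k > 0 for all k ∈ G, that Cov_{π_s}(z_k, z_j) ≥ 0 for all k ∈ G with k ≠ j, that Cov_{π_s}(r_ans, z_j) ≥ 0, and that 0 < p_j(s) < 1. Then the derivative at t = s_j of t ↦ E_{π_{s[j := t]}}[r_total] is at least α_j·p_j(s)·(1 − p_j(s)), which is strictly positive. -/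
open Finset

namespace LongRLVR

/-! Moving the logit `s_j` to `t` multiplies every weight by `exp((t - s_j) z_j)`, so by the
quotient rule `d/ds_j E_{π_s}[X] = Cov_{π_s}(X, z_j)`. For `X = r_total` this covariance splits
linearly into `Cov(r_ans, z_j)`, the cross terms `α_k Cov(z_k, z_j)` and
`α_j Var(z_j) = α_j p_j (1 - p_j)`, of which all but the last are nonnegative by hypothesis. -/

section Covariance

variable {N : ℕ} (μ : (Fin N → Bool) → ℝ)

lemma expec_add (X Y : (Fin N → Bool) → ℝ) :
    expec μ (fun Z => X Z + Y Z) = expec μ X + expec μ Y := by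
  simp only [expec, mul_add, sum_add_distrib]

lemma expec_const_mul (c : ℝ) (X : (Fin N → Bool) → ℝ) :
    expec μ (fun Z => c * X Z) = c * expec μ X := by
  rw [expec, expec, mul_sum]
  exact sum_congr rfl fun Z _ => by ring

lemma expec_sum {ι : Type*} (G : Finset ι) (X : ι → (Fin N → Bool) → ℝ) :
    expec μ (fun Z => ∑ k ∈ G, X k Z) = ∑ k ∈ G, expec μ (X k) := by
  simp only [expec, mul_sum]
  exact sum_comm

lemma cov_add_left (X Y W : (Fin N → Bool) → ℝ) :
    cov μ (fun Z => X Z + Y Z) W = cov μ X W + cov μ Y W := by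
  simp only [cov, add_mul, expec_add]
  ring

lemma cov_const_mul_left (c : ℝ) (X W : (Fin N → Bool) → ℝ) :
    cov μ (fun Z => c * X Z) W = c * cov μ X W := by
  simp only [cov, mul_assoc, expec_const_mul]
  ring

lemma cov_sum_left {ι : Type*} (G : Finset ι) (X : ι → (Fin N → Bool) → ℝ)
    (W : (Fin N → Bool) → ℝ) :
    cov μ (fun Z => ∑ k ∈ G, X k Z) W = ∑ k ∈ G, cov μ (X k) W := by
  simp only [cov, sum_mul, expec_sum, ← sum_sub_distrib]

lemma cov_ind_self (j : Fin N) :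
    cov μ (fun Z => ind Z j) (fun Z => ind Z j) =
      expec μ (fun Z => ind Z j) * (1 - expec μ (fun Z => ind Z j)) := by
  have hsq : (fun Z : Fin N → Bool => ind Z j * ind Z j) = fun Z => ind Z j := by
    funext Z; unfold ind; split_ifs <;> norm_num
  rw [cov, hsq]
  ring

end Covariance

section LogLinear

variable {N : ℕ} (s : Fin N → ℝ) (ψ : (Fin N → Bool) → ℝ)

lemma wt_pos (Z : Fin N → Bool) : 0 < wt s ψ Z := Real.exp_pos _

lemma expec_pol (X : (Fin N → Bool) → ℝ) :
    expec (pol s ψ) X = (∑ Z, wt s ψ Z * X Z) / ∑ Z, wt s ψ Z := by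
  simp only [expec, pol, sum_div, div_mul_eq_mul_div]

lemma wt_update (j : Fin N) (t : ℝ) (Z : Fin N → Bool) :
    wt (Function.update s j t) ψ Z = Real.exp ((t - s j) * ind Z j) * wt s ψ Z := by
  have hsum : ∑ k, Function.update s j t k * ind Z k =
      ∑ k, s k * ind Z k + (t - s j) * ind Z j := by
    rw [← sub_eq_iff_eq_add', ← sum_sub_distrib, sum_eq_single j]
    · simp [sub_mul]
    · intro k _ hk; simp [Function.update_of_ne hk]
    · simp
  rw [wt, wt, ← Real.exp_add, hsum]
  ring_nf

lemma hasDerivAt_sum_wt_update_mul (j : Fin N) (X : (Fin N → Bool) → ℝ) :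
    HasDerivAt (fun t => ∑ Z, wt (Function.update s j t) ψ Z * X Z)
      (∑ Z, wt s ψ Z * (X Z * ind Z j)) (s j) := by
  simp_rw [wt_update]
  refine HasDerivAt.fun_sum fun Z _ => ?_
  have := ((((hasDerivAt_id' (s j)).sub_const (s j)).mul_const (ind Z j)).exp.mul_const
    (wt s ψ Z)).mul_const (X Z)
  refine this.congr_deriv ?_
  rw [sub_self, zero_mul, Real.exp_zero]
  ring

lemma hasDerivAt_expec_pol_update (j : Fin N) (X : (Fin N → Bool) → ℝ) :
    HasDerivAt (fun t => expec (pol (Function.update s j t) ψ) X)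
      (cov (pol s ψ) X (fun Z => ind Z j)) (s j) := by
  have hB : ∑ Z, wt s ψ Z ≠ 0 := (sum_pos (fun Z _ => wt_pos s ψ Z) univ_nonempty).ne'
  have hden : HasDerivAt (fun t => ∑ Z, wt (Function.update s j t) ψ Z)
      (∑ Z, wt s ψ Z * ind Z j) (s j) := by
    simpa using hasDerivAt_sum_wt_update_mul s ψ j (fun _ => 1)
  have hquot := (hasDerivAt_sum_wt_update_mul s ψ j X).fun_div hden
    (by rwa [Function.update_eq_self])
  simp only [Function.update_eq_self] at hquot
  simp only [expec_pol]
  refine hquot.congr_deriv ?_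
  rw [cov, expec_pol, expec_pol, expec_pol]
  field_simp

end LogLinear

/-- Proposition 2, non-vanishing lower bound: with positive weights on `G`,
nonnegative cross-covariances, nonnegative answer covariance, and `0 < p_j(s) < 1`, the
derivative at `t = s_j` of `t ↦ E_{π_{s[j:=t]}}[r_total]` is at least
`α_j p_j(s)(1 − p_j(s))`, which is strictly positive. -/
theorem stmt13 (N : ℕ) (s : Fin N → ℝ) (ψ : (Fin N → Bool) → ℝ) (G : Finset (Fin N))
    (α : Fin N → ℝ) (rans : (Fin N → Bool) → ℝ) (j : Fin N) (hj : j ∈ G)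
    (hα : ∀ k ∈ G, 0 < α k)
    (hcovkj : ∀ k ∈ G, k ≠ j →
      0 ≤ cov (pol s ψ) (fun Z => ind Z k) (fun Z => ind Z j))
    (hcovr : 0 ≤ cov (pol s ψ) rans (fun Z => ind Z j))
    (h0 : 0 < pmarg s ψ j) (h1 : pmarg s ψ j < 1) :
    DifferentiableAt ℝ
      (fun t : ℝ => expec (pol (Function.update s j t) ψ)
        (fun Z => rans Z + ∑ k ∈ G, α k * ind Z k)) (s j) ∧
    α j * (pmarg s ψ j * (1 - pmarg s ψ j))
      ≤ deriv (fun t : ℝ => expec (pol (Function.update s j t) ψ)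
          (fun Z => rans Z + ∑ k ∈ G, α k * ind Z k)) (s j) ∧
    0 < α j * (pmarg s ψ j * (1 - pmarg s ψ j)) := by
  have hderiv := hasDerivAt_expec_pol_update s ψ j (fun Z => rans Z + ∑ k ∈ G, α k * ind Z k)
  have hcov : cov (pol s ψ) (fun Z => rans Z + ∑ k ∈ G, α k * ind Z k) (fun Z => ind Z j)
      = cov (pol s ψ) rans (fun Z => ind Z j)
        + α j * (pmarg s ψ j * (1 - pmarg s ψ j))
        + ∑ k ∈ G.erase j, α k * cov (pol s ψ) (fun Z => ind Z k) (fun Z => ind Z j) := by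
    simp only [cov_add_left, cov_sum_left, cov_const_mul_left, ← add_sum_erase G _ hj,
      cov_ind_self, pmarg]
    ring
  have hrest : 0 ≤ ∑ k ∈ G.erase j, α k * cov (pol s ψ) (fun Z => ind Z k) (fun Z => ind Z j) :=
    sum_nonneg fun k hk => mul_nonneg (hα k (mem_of_mem_erase hk)).le
      (hcovkj k (mem_of_mem_erase hk) (ne_of_mem_erase hk))
  refine ⟨hderiv.differentiableAt, ?_, mul_pos (hα j hj) (mul_pos h0 (sub_pos.mpr h1))⟩
  rw [hderiv.deriv, hcov]
  linarith

end LongRLVR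
end
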